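/- For ε₀ ∈ (0, 1/2), the approximated ℓ₀ regularization function f_{ε₀} is nondecreasing on [0, 1] and takes values in [0, 1], with f_{ε₀}(0) = 0 and f_{ε₀}(d) = 1 for all d ∈ [2ε₀, 1]. -/

import Mathlib

/-- The cubic blending polynomial `p₃(d) = ½t³ − (3/2)t² + (3/2)t + ½` with
`t = (2d − ε₀)/(3ε₀)`: the unique polynomial of degree at most 3 satisfying
`p₃(ε₀/2) = 1/2`, `p₃′(ε₀/2) = 1/ε₀`, `p₃(2ε₀) = 1`, `p₃′(2ε₀) = 0`. -/
noncomputable def p3 (ε d : ℝ) : ℝ :=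
  (1 / 2) * ((2 * d - ε) / (3 * ε)) ^ 3
    - (3 / 2) * ((2 * d - ε) / (3 * ε)) ^ 2
    + (3 / 2) * ((2 * d - ε) / (3 * ε)) + 1 / 2

/-- The approximated ℓ₀ regularization function `f_{ε₀}`. -/
noncomputable def approxL0 (ε d : ℝ) : ℝ :=
  if d ≤ ε / 2 then d / ε else if d < 2 * ε then p3 ε d else 1

/-!
Completing the cube, `p₃(d) = ½ (t − 1)³ + 1`, so `p₃` is nondecreasing. Since `p₃` matches the
linear piece at `ε₀/2` and the constant piece at `2ε₀`, the three monotone pieces glue to a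
nondecreasing function on all of `ℝ`; the bounds then follow from `f_{ε₀}(0) = 0` and
`f_{ε₀} = 1` on `[2ε₀, ∞)`.
-/

open Set

theorem p3_eq_cube (ε d : ℝ) : p3 ε d = ((2 * d - ε) / (3 * ε) - 1) ^ 3 / 2 + 1 := by
  unfold p3
  ring

theorem p3_monotone {ε : ℝ} (hε : 0 < ε) : Monotone (p3 ε) := by
  have cube_mono : Monotone fun t : ℝ ↦ t ^ 3 := (Odd.strictMono_pow (by decide)).monotone
  intro x y hxy
  have : (2 * x - ε) / (3 * ε) - 1 ≤ (2 * y - ε) / (3 * ε) - 1 := by gcongr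
  simp only [p3_eq_cube]
  linarith [cube_mono this]

theorem p3_half {ε : ℝ} (hε : ε ≠ 0) : p3 ε (ε / 2) = 1 / 2 := by
  rw [p3_eq_cube]
  field_simp
  ring

theorem p3_two_mul {ε : ℝ} (hε : ε ≠ 0) : p3 ε (2 * ε) = 1 := by
  rw [p3_eq_cube]
  field_simp
  ring

theorem approxL0_of_le_half {ε d : ℝ} (hd : d ≤ ε / 2) : approxL0 ε d = d / ε :=
  if_pos hd

theorem approxL0_of_two_mul_le {ε d : ℝ} (hε : 0 < ε) (hd : 2 * ε ≤ d) : approxL0 ε d = 1 := by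
  rw [approxL0, if_neg (by linarith), if_neg (not_lt.mpr hd)]

theorem approxL0_eqOn_p3 {ε : ℝ} (hε : 0 < ε) : EqOn (approxL0 ε) (p3 ε) (Icc (ε / 2) (2 * ε)) := by
  rintro d ⟨hd₁, hd₂⟩
  rcases hd₁.eq_or_lt with rfl | hd₁
  · rw [approxL0_of_le_half le_rfl, p3_half hε.ne']
    field_simp
  rcases hd₂.lt_or_eq with hd₂ | rfl
  · rw [approxL0, if_neg (not_le.mpr hd₁), if_pos hd₂]
  · rw [approxL0_of_two_mul_le hε le_rfl, p3_two_mul hε.ne']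

theorem approxL0_monotone {ε : ℝ} (hε : 0 < ε) : Monotone (approxL0 ε) := by
  have linear : MonotoneOn (approxL0 ε) (Iic (ε / 2)) :=
    ((monotone_id.div_const hε.le).monotoneOn _).congr fun _ hd ↦ (approxL0_of_le_half hd).symm
  have cubic : MonotoneOn (approxL0 ε) (Icc (ε / 2) (2 * ε)) :=
    ((p3_monotone hε).monotoneOn _).congr (approxL0_eqOn_p3 hε).symm
  have flat : MonotoneOn (approxL0 ε) (Ici (2 * ε)) :=
    monotoneOn_const.congr fun _ hd ↦ (approxL0_of_two_mul_le hε hd).symm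
  have hle : ε / 2 ≤ 2 * ε := by linarith
  refine linear.Iic_union_Ici ?_
  rw [← Icc_union_Ici_eq_Ici hle]
  exact cubic.union_right flat (isGreatest_Icc hle) isLeast_Ici

theorem approxL0_le_one {ε : ℝ} (hε : 0 < ε) (d : ℝ) : approxL0 ε d ≤ 1 := by
  rcases le_total d (2 * ε) with hd | hd
  · calc approxL0 ε d ≤ approxL0 ε (2 * ε) := approxL0_monotone hε hd
      _ = 1 := approxL0_of_two_mul_le hε le_rfl
  · exact (approxL0_of_two_mul_le hε hd).le

theorem approxL0_zero {ε : ℝ} (hε : 0 ≤ ε) : approxL0 ε 0 = 0 := by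
  rw [approxL0_of_le_half (by linarith), zero_div]

theorem approxL0_monotone_and_bounds
    (ε : ℝ) (hε : ε ∈ Set.Ioo (0 : ℝ) (1 / 2)) :
    MonotoneOn (approxL0 ε) (Set.Icc 0 1)
    ∧ (∀ d ∈ Set.Icc (0 : ℝ) 1, approxL0 ε d ∈ Set.Icc (0 : ℝ) 1)
    ∧ approxL0 ε 0 = 0
    ∧ ∀ d ∈ Set.Icc (2 * ε) 1, approxL0 ε d = 1 := by
  have hε₀ : 0 < ε := hε.1
  refine ⟨(approxL0_monotone hε₀).monotoneOn _, fun d hd ↦ ⟨?_, approxL0_le_one hε₀ d⟩,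
    approxL0_zero hε₀.le, fun d hd ↦ approxL0_of_two_mul_le hε₀ hd.1⟩
  calc 0 = approxL0 ε 0 := (approxL0_zero hε₀.le).symm
    _ ≤ approxL0 ε d := approxL0_monotone hε₀ hd.1
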